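/- arXiv:1603.05044 — 2 statements merged into one kernel-verified Lean document; each statement's English description precedes it below -/
import Mathlib

section
/- For every positive integer p, π·J_p = -p²·ln p + (ln(2π) - γ)·p² - p + 2p²·C_p. -/
/-!
Sorting `1, …, pN` by their residues mod `p` and summing by parts gives the exact identity
`∑_{n ≤ N} H_{pn} = (N + ½) H_{pN} - N + (H_N + D_N) / (2p)` with
`D_N = ∑_{0<k<p} k (∑_{q<N} 1/(pq + k) - ∑_{q<N} 1/(pq + p - k))`.
Pairing `k` with `p - k` makes `D_N` a finite combination of partial sums of the Mittag-Leffler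
series of `π cot πx` at `x = k/p`, so `D_N → π J_p / p`. Together with
`H_m = log m + γ + 1/(2m) + o(1/m)` (telescoping against `log x ≤ sinh (log x)` and the series of
`log (1 + 1/a)`) and Stirling's formula, this identifies the limit of the partial sums of `C_p`.
-/

open Real Filter Topology Finset

/-- The `n`-th harmonic number `H_n = ∑_{k=1}^n 1/k` (with `H 0 = 0`). -/
noncomputable def H (n : ℕ) : ℝ := ∑ k ∈ Finset.range n, (1 : ℝ) / (k + 1)

/-- The sum of cotangents `J_p = ∑_{k=1}^{p-1} k·cot(kπ/p)`. -/
noncomputable def Jp (p : ℕ) : ℝ := ∑ k ∈ Finset.Icc 1 (p - 1), (k : ℝ) * Real.cot (k * π / p)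

local notation "γ" => Real.eulerMascheroniConstant

theorem Real.log_le_sub_inv_div_two {x : ℝ} (hx : 1 ≤ x) : log x ≤ (x - x⁻¹) / 2 := by
  rw [← sinh_log (by linarith)]
  exact self_le_sinh_iff.mpr (log_nonneg hx)

theorem Real.two_div_le_log_one_add_inv {a : ℝ} (ha : 0 < a) :
    2 / (2 * a + 1) ≤ log (1 + a⁻¹) := by
  have h := le_hasSum (hasSum_log_one_add_inv ha) 0 fun k _ ↦ by positivity
  simpa [div_eq_mul_inv] using h

theorem le_of_tendsto_of_sub_succ_le {f g : ℕ → ℝ} {a : ℝ} (hf : Tendsto f atTop (𝓝 a))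
    (hg : Tendsto g atTop (𝓝 a)) {n : ℕ}
    (h : ∀ m ≥ n, f m - f (m + 1) ≤ g m - g (m + 1)) :
    f n ≤ g n := by
  have hanti : Antitone fun k ↦ g (n + k) - f (n + k) :=
    antitone_nat_of_succ_le fun k ↦ by
      rw [← add_assoc]; linarith [h (n + k) (by omega)]
  have hlim := (hg.sub hf).comp (tendsto_add_atTop_nat n)
  rw [sub_self] at hlim
  simpa using hanti.le_of_tendsto (hlim.congr fun k ↦ by simp [add_comm]) 0

theorem H_succ (n : ℕ) : H (n + 1) = H n + 1 / (n + 1) := by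
  simp [H, sum_range_succ]

theorem H_add (a b : ℕ) : H (a + b) = H a + ∑ k ∈ Icc 1 b, 1 / ((a : ℝ) + k) := by
  induction b with
  | zero => simp
  | succ b ih =>
    rw [← add_assoc, H_succ, ih, sum_Icc_succ_top (by omega)]
    push_cast
    ring

theorem tendsto_H_sub_log : Tendsto (fun n ↦ H n - log n) atTop (𝓝 γ) := by
  convert tendsto_harmonic_sub_log using 3 with n
  simp [H, harmonic]

theorem H_sub_log_sub_succ {m : ℕ} (hm : m ≠ 0) :
    (H m - log m) - (H (m + 1) - log ↑(m + 1)) = log (1 + (m : ℝ)⁻¹) - 1 / (m + 1) := by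
  have hm' : (0 : ℝ) < m := by norm_cast; omega
  rw [H_succ, show 1 + (m : ℝ)⁻¹ = (m + 1) / m by field_simp, log_div (by positivity) hm'.ne']
  push_cast
  ring

theorem H_sub_log_le {n : ℕ} (hn : n ≠ 0) : H n - log n ≤ γ + 1 / (2 * n) := by
  refine le_of_tendsto_of_sub_succ_le (g := fun n : ℕ ↦ γ + 1 / (2 * (n : ℝ)))
    tendsto_H_sub_log ?_ fun m hm ↦ ?_
  · simpa [div_eq_mul_inv] using
      ((tendsto_inv_atTop_zero.comp tendsto_natCast_atTop_atTop).div_const 2).const_add γ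
  have hm' : (0 : ℝ) < m := by norm_cast; omega
  rw [H_sub_log_sub_succ (by omega)]
  push_cast
  calc log (1 + (m : ℝ)⁻¹) - 1 / (m + 1)
      ≤ (1 + (m : ℝ)⁻¹ - (1 + (m : ℝ)⁻¹)⁻¹) / 2 - 1 / (m + 1) :=
        sub_le_sub_right (log_le_sub_inv_div_two (by simp)) _
    _ = _ := by field_simp; ring

theorem le_H_sub_log {n : ℕ} (hn : n ≠ 0) : γ + 1 / (2 * (n + 1)) ≤ H n - log n := by
  refine le_of_tendsto_of_sub_succ_le (f := fun n : ℕ ↦ γ + 1 / (2 * ((n : ℝ) + 1)))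
    ?_ tendsto_H_sub_log fun m hm ↦ ?_
  · simpa [div_eq_mul_inv] using (tendsto_one_div_add_atTop_nhds_zero_nat.div_const 2).const_add γ
  have hm' : (0 : ℝ) < m := by norm_cast; omega
  rw [H_sub_log_sub_succ (by omega)]
  push_cast
  calc γ + 1 / (2 * ((m : ℝ) + 1)) - (γ + 1 / (2 * ((m : ℝ) + 1 + 1)))
      ≤ 2 / (2 * m + 1) - 1 / (m + 1) := by
        field_simp
        nlinarith
    _ ≤ _ := sub_le_sub_right (two_div_le_log_one_add_inv hm') _

theorem tendsto_mul_H_sub_log_sub :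
    Tendsto (fun n : ℕ ↦ n * (H n - log n - γ)) atTop (𝓝 (1 / 2)) := by
  have hlow : Tendsto (fun n : ℕ ↦ (n : ℝ) / (n + 1) / 2) atTop (𝓝 (1 / 2)) := by
    simpa using (tendsto_natCast_div_add_atTop (1 : ℝ)).div_const 2
  refine tendsto_of_tendsto_of_tendsto_of_le_of_le' hlow tendsto_const_nhds ?_ ?_ <;>
    filter_upwards [eventually_ne_atTop 0] with n hn
  · have := le_H_sub_log hn
    calc (n : ℝ) / (n + 1) / 2 = n * (1 / (2 * (n + 1))) := by field_simp
      _ ≤ _ := by gcongr; linarith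
  · have := H_sub_log_le hn
    calc (n : ℝ) * (H n - log n - γ) ≤ n * (1 / (2 * n)) := by gcongr; linarith
      _ = 1 / 2 := by field_simp

theorem tendsto_add_mul_H_sub_log_sub (c : ℝ) :
    Tendsto (fun n : ℕ ↦ (n + c) * (H n - log n - γ)) atTop (𝓝 (1 / 2)) := by
  have hu : Tendsto (fun n ↦ H n - log n - γ) atTop (𝓝 0) := by
    simpa using tendsto_H_sub_log.sub_const γ
  simpa [add_mul] using tendsto_mul_H_sub_log_sub.add (hu.const_mul c)

theorem tendsto_log_factorial_sub :
    Tendsto (fun n : ℕ ↦ log n.factorial - (n + 1 / 2) * log n + n) atTop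
      (𝓝 (log (2 * π) / 2)) := by
  have h := ((continuousAt_log (by positivity)).tendsto.comp
    Stirling.tendsto_stirlingSeq_sqrt_pi).add_const (log 2 / 2)
  rw [Function.comp_def, log_sqrt pi_pos.le, ← add_div, ← log_mul pi_pos.ne' two_ne_zero,
    mul_comm] at h
  refine h.congr' ?_
  filter_upwards [eventually_ne_atTop 0] with n hn
  rw [Stirling.log_stirlingSeq_formula, log_mul two_ne_zero (by positivity),
    log_div (by positivity) (exp_pos 1).ne', log_exp]
  ring

theorem sum_inv_sub_inv_eq_sum_cotTerm (x : ℂ) (N : ℕ) :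
    ∑ q ∈ range N, (1 / (q + x) - 1 / (q + 1 - x)) =
      1 / x + ∑ j ∈ range N, cotTerm x j - 1 / (x + N) := by
  induction N with
  | zero => simp
  | succ N ih =>
    rw [sum_range_succ, ih, sum_range_succ, cotTerm]
    push_cast
    rw [show (N : ℂ) + 1 - x = -(x - (N + 1)) by ring, show (N : ℂ) + x = x + N by ring,
      div_neg]
    ring

theorem tendsto_sum_inv_sub_inv_cot {x : ℝ} (hx : ∀ n : ℤ, (n : ℝ) ≠ x) :
    Tendsto (fun N : ℕ ↦ ∑ q ∈ range N, (1 / (q + x) - 1 / (q + 1 - x))) atTop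
      (𝓝 (π * cot (π * x))) := by
  have hxZ : (x : ℂ) ∈ Complex.integerComplement := fun ⟨n, hn⟩ ↦ hx n (mod_cast hn)
  have htail := Filter.tendsto_ofReal_iff.mpr
    (tendsto_atTop_add_const_right _ x tendsto_natCast_atTop_atTop).inv_tendsto_atTop
  have hlim := ((tendsto_logDeriv_euler_cot_sub hxZ).const_add (1 / (x : ℂ))).sub htail
  rw [← Filter.tendsto_ofReal_iff]
  push_cast
  convert hlim using 1
  · ext N; rw [sum_inv_sub_inv_eq_sum_cotTerm]; simp [add_comm]
  · simp

noncomputable def harmonicAP (p k N : ℕ) : ℝ := ∑ q ∈ range N, 1 / ((p : ℝ) * q + k)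

theorem harmonicAP_succ (p k N : ℕ) :
    harmonicAP p k (N + 1) = harmonicAP p k N + 1 / ((p : ℝ) * N + k) :=
  sum_range_succ ..

theorem harmonicAP_self {p : ℕ} (hp : p ≠ 0) (N : ℕ) : harmonicAP p p N = H N / p := by
  rw [harmonicAP, H, sum_div]
  refine sum_congr rfl fun q _ ↦ ?_
  field_simp

theorem H_mul_eq_sum_harmonicAP (p N : ℕ) : H (p * N) = ∑ k ∈ Icc 1 p, harmonicAP p k N := by
  induction N with
  | zero => simp [H, harmonicAP]
  | succ N ih =>
    simp only [mul_add_one, H_add, ih, harmonicAP_succ, sum_add_distrib]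
    push_cast
    rfl

theorem sum_range_H_mul {p : ℕ} (hp : p ≠ 0) (N : ℕ) :
    ∑ n ∈ range N, H (p * (n + 1)) =
      N * H (p * N) - N + (∑ k ∈ Icc 1 p, k * harmonicAP p k N) / p := by
  induction N with
  | zero => simp [harmonicAP]
  | succ N ih =>
    -- the new terms `1 / (p N + k)` enter with total weight `∑ₖ (N + k / p) / (p N + k) = 1`
    have hweights : (N : ℝ) * ∑ k ∈ Icc 1 p, 1 / ((p : ℝ) * N + k)
        + (∑ k ∈ Icc 1 p, k * (1 / ((p : ℝ) * N + k))) / p = 1 := by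
      rw [mul_sum, sum_div, ← sum_add_distrib,
        sum_congr rfl fun (k : ℕ) hk ↦
          show (N : ℝ) * (1 / (p * N + k)) + k * (1 / (p * N + k)) / p = 1 / p by
          have : (0 : ℝ) < k := by simp at hk; exact_mod_cast hk.1
          field_simp]
      simp [hp]
    rw [sum_range_succ, ih, mul_add_one, H_add]
    simp only [harmonicAP_succ, mul_add, sum_add_distrib]
    push_cast
    linear_combination -hweights

theorem sum_mul_sub_reflect (b : ℕ → ℝ) (p : ℕ) :
    ∑ k ∈ Icc 1 (p - 1), k * (b k - b (p - k)) =
      ∑ k ∈ Icc 1 (p - 1), (2 * k - p : ℝ) * b k := by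
  have hreflect :
      ∑ k ∈ Icc 1 (p - 1), k * b (p - k) = ∑ k ∈ Icc 1 (p - 1), (p - k : ℝ) * b k := by
    refine sum_nbij' (p - ·) (p - ·) ?_ ?_ ?_ ?_ fun k hk ↦ ?_
    any_goals intro k hk; simp only [mem_Icc] at hk ⊢; omega
    rw [Nat.cast_sub (by simp only [mem_Icc] at hk; omega)]
    ring
  rw [sum_congr rfl fun k _ ↦ mul_sub .., sum_sub_distrib, hreflect, ← sum_sub_distrib]
  exact sum_congr rfl fun k _ ↦ by ring

noncomputable def JpApprox (p N : ℕ) : ℝ :=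
  ∑ k ∈ Icc 1 (p - 1), k * (harmonicAP p k N - harmonicAP p (p - k) N)

theorem sum_range_H_mul_eq {p : ℕ} (hp : p ≠ 0) (N : ℕ) :
    ∑ n ∈ range N, H (p * (n + 1)) =
      (N + 1 / 2) * H (p * N) - N + (H N + JpApprox p N) / (2 * p) := by
  have hIcc : Icc 1 p = insert p (Icc 1 (p - 1)) := by
    ext k; simp only [mem_Icc, mem_insert]; omega
  have hJ : JpApprox p N = 2 * ∑ k ∈ Icc 1 (p - 1), k * harmonicAP p k N
      - p * ∑ k ∈ Icc 1 (p - 1), harmonicAP p k N := by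
    rw [JpApprox, sum_mul_sub_reflect, mul_sum, mul_sum, ← sum_sub_distrib]
    exact sum_congr rfl fun k _ ↦ by ring
  rw [sum_range_H_mul hp, H_mul_eq_sum_harmonicAP, hIcc, sum_insert (by simp; omega),
    sum_insert (by simp; omega), harmonicAP_self hp, hJ]
  field_simp
  ring

theorem tendsto_harmonicAP_sub {p k : ℕ} (hk : 0 < k) (hkp : k < p) :
    Tendsto (fun N ↦ harmonicAP p k N - harmonicAP p (p - k) N) atTop
      (𝓝 (π * cot (k * π / p) / p)) := by
  have hp : (0 : ℝ) < p := by norm_cast; omega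
  have hx : ∀ n : ℤ, (n : ℝ) ≠ k / p := by
    intro n hn
    have h0 : (0 : ℝ) < n := by rw [hn]; positivity
    have h1 : (n : ℝ) < 1 := by rw [hn, div_lt_one hp]; exact_mod_cast hkp
    have : 0 < n ∧ n < 1 := ⟨by exact_mod_cast h0, by exact_mod_cast h1⟩
    omega
  convert (tendsto_sum_inv_sub_inv_cot hx).div_const (p : ℝ) using 2 with N
  · rw [harmonicAP, harmonicAP, sum_div, ← sum_sub_distrib]
    refine sum_congr rfl fun q _ ↦ ?_
    rw [Nat.cast_sub hkp.le]
    field_simp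
    ring
  · congr 3; ring

theorem tendsto_JpApprox (p : ℕ) : Tendsto (JpApprox p) atTop (𝓝 (π * Jp p / p)) := by
  rw [Jp, mul_sum, sum_div]
  refine tendsto_finsetSum _ fun k hk ↦ ?_
  rw [mem_Icc] at hk
  convert (tendsto_harmonicAP_sub (p := p) (k := k) (by omega) (by omega)).const_mul _ using 2
  ring

theorem sum_range_H_mul_sub_log {p N : ℕ} (hp : p ≠ 0) (hN : N ≠ 0) :
    ∑ n ∈ range N,
        (H (p * (n + 1)) - log ((p : ℝ) * (n + 1)) - γ - 1 / (2 * (p : ℝ) * (n + 1))) =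
      ((p * N : ℕ) + (p : ℝ) / 2) * (H (p * N) - log (p * N : ℕ) - γ) / p + (log p + γ) / 2
        - (log N.factorial - (N + 1 / 2) * log N + N) + JpApprox p N / (2 * p) := by
  have hlog : ∑ n ∈ range N, log ((p : ℝ) * (n + 1)) = N * log p + log N.factorial := by
    simp_rw [log_mul (Nat.cast_ne_zero.mpr hp) (Nat.cast_add_one_ne_zero _), sum_add_distrib,
      sum_const, card_range, nsmul_eq_mul, ← prod_range_add_one_eq_factorial]
    push_cast
    rw [log_prod fun n _ ↦ Nat.cast_add_one_ne_zero n]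
  have hrecip : ∑ n ∈ range N, 1 / (2 * (p : ℝ) * (n + 1)) = H N / (2 * p) := by
    rw [H, sum_div]
    exact sum_congr rfl fun n _ ↦ by field_simp
  simp only [sum_sub_distrib, sum_range_H_mul_eq hp, hlog, hrecip, sum_const, card_range,
    nsmul_eq_mul]
  push_cast
  rw [log_mul (Nat.cast_ne_zero.mpr hp) (Nat.cast_ne_zero.mpr hN)]
  field_simp
  ring

theorem pi_Jp_eq (p : ℕ) (hp : 0 < p) :
    ∃ C : ℝ,
      Tendsto (fun N => ∑ n ∈ Finset.range N,
          (H (p * (n + 1)) - Real.log ((p : ℝ) * (n + 1)) - Real.eulerMascheroniConstant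
            - 1 / (2 * (p : ℝ) * (n + 1)))) atTop (𝓝 C) ∧
      π * Jp p = -(p : ℝ) ^ 2 * Real.log p
        + (Real.log (2 * π) - Real.eulerMascheroniConstant) * (p : ℝ) ^ 2
        - p + 2 * (p : ℝ) ^ 2 * C := by
  have hp' : (p : ℝ) ≠ 0 := by positivity
  refine ⟨1 / 2 / p + (log p + γ) / 2 - log (2 * π) / 2 + π * Jp p / p / (2 * p), ?_,
    by field_simp; ring⟩
  have hmain : Tendsto
      (fun N : ℕ ↦ ((p * N : ℕ) + (p : ℝ) / 2) * (H (p * N) - log (p * N : ℕ) - γ))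
      atTop (𝓝 (1 / 2)) :=
    (tendsto_add_mul_H_sub_log_sub _).comp (tendsto_id.const_mul_atTop' hp)
  refine (((hmain.div_const p).add_const _).sub tendsto_log_factorial_sub |>.add
    ((tendsto_JpApprox p).div_const (2 * p))).congr' ?_
  filter_upwards [eventually_ne_atTop 0] with N hN
  exact (sum_range_H_mul_sub_log hp.ne' hN).symm
end

section
/- For every positive integer p, Σ_{n=0}^{∞} (-1)^{n}·( H_{p(n+1)} - H_{pn} ) = ln 2/p + (π/(2p))·Σ_{k=1}^{p-1} csc(kπ/p). -/
/-!
Grouping the series in blocks of `p` terms gives `∑_{j<p} ∑_n (-1)^n / (pn + j + 1)`.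
Integrating the geometric series `∑_n (-1)^n x^(pn+j)` shows that the inner alternating series
converges to `I_j = ∫₀¹ x^j / (1 + x^p) dx`, the remainder after `N` terms being at most
`1 / (pN + j + 1)`. The last integral is elementary, `I_{p-1} = log 2 / p`. For `i + j + 2 = p`
the substitution `x ↦ 1/x` turns `I_i` into the integral of `x^j / (1 + x^p)` over `(1, ∞)`, so
`I_j + I_i` is the integral over `(0, ∞)`; the substitutions `t = x^p` and `u = t / (1 + t)` turn
it into the Beta integral `B(a, 1 - a) = Γ(a) Γ(1 - a) = π / sin (π a)` with `a = (j + 1) / p`.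
Summing over the pairs `(j, p - 2 - j)` counts every cosecant twice.
-/

open Real Filter Topology MeasureTheory Set

theorem integral_rpow_mul_one_sub_rpow {a b : ℝ} (ha : 0 < a) (hb : 0 < b) :
    ∫ x in (0 : ℝ)..1, x ^ (a - 1) * (1 - x) ^ (b - 1) = Gamma a * Gamma b / Gamma (a + b) := by
  have hβ := Complex.betaIntegral_eq_Gamma_mul_div a b (by simpa) (by simpa)
  rw [Complex.betaIntegral] at hβ
  rw [← Complex.ofReal_inj, ← intervalIntegral.integral_ofReal]
  push_cast [← Complex.Gamma_ofReal]
  rw [← hβ]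
  refine intervalIntegral.integral_congr fun x hx => ?_
  rw [Set.uIcc_of_le zero_le_one] at hx
  rw [Complex.ofReal_cpow hx.1, Complex.ofReal_cpow (sub_nonneg.2 hx.2)]
  push_cast
  rfl

theorem image_div_one_add_Ioi_zero : (fun t : ℝ => t / (1 + t)) '' Ioi 0 = Ioo 0 1 := by
  ext u
  constructor
  · rintro ⟨t, ht, rfl⟩
    have ht : (0 : ℝ) < t := ht
    exact ⟨by positivity, (div_lt_one (by positivity)).2 (by linarith)⟩
  · rintro ⟨hu₀, hu₁⟩
    refine ⟨u / (1 - u), div_pos hu₀ (by linarith), ?_⟩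
    field_simp
    ring

theorem injOn_div_one_add_Ioi_zero : InjOn (fun t : ℝ => t / (1 + t)) (Ioi 0) := by
  intro s hs t ht hst
  have hs : (0 : ℝ) < s := hs
  have ht : (0 : ℝ) < t := ht
  field_simp at hst
  linarith

theorem inv_one_add_sq_mul_rpow_div_one_add {a b t : ℝ} (ht : 0 < t) :
    ((1 + t) ^ 2)⁻¹ * ((t / (1 + t)) ^ (a - 1) * (1 - t / (1 + t)) ^ (b - 1))
      = t ^ (a - 1) / (1 + t) ^ (a + b) := by
  have h1t : (0 : ℝ) < 1 + t := by linarith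
  have hexp : (1 + t) ^ (-(a + b))
      = (1 + t) ^ (-((2 : ℕ) : ℝ)) * (1 + t) ^ (-(a - 1)) * (1 + t) ^ (-(b - 1)) := by
    rw [← rpow_add h1t, ← rpow_add h1t]
    congr 1
    push_cast
    ring
  rw [show 1 - t / (1 + t) = (1 + t)⁻¹ by field_simp; ring, div_rpow ht.le h1t.le,
    inv_rpow h1t.le, ← rpow_natCast, div_eq_mul_inv, div_eq_mul_inv]
  simp only [← rpow_neg h1t.le]
  rw [hexp]
  ring

theorem integral_Ioi_rpow_div_one_add_rpow_add {a b : ℝ} (ha : 0 < a) (hb : 0 < b) :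
    ∫ t in Ioi 0, t ^ (a - 1) / (1 + t) ^ (a + b) = Gamma a * Gamma b / Gamma (a + b) := by
  have hderiv : ∀ t ∈ Ioi (0 : ℝ),
      HasDerivWithinAt (fun t : ℝ => t / (1 + t)) ((1 + t) ^ 2)⁻¹ (Ioi 0) t := by
    intro t ht
    have ht : (0 : ℝ) < t := ht
    have h := (hasDerivAt_id t).div ((hasDerivAt_id t).const_add 1) (by positivity)
    refine (h.congr_deriv ?_).hasDerivWithinAt
    simp only [id]
    ring
  rw [← integral_rpow_mul_one_sub_rpow ha hb, intervalIntegral.integral_of_le zero_le_one,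
    integral_Ioc_eq_integral_Ioo, ← image_div_one_add_Ioi_zero,
    integral_image_eq_integral_abs_deriv_smul measurableSet_Ioi hderiv injOn_div_one_add_Ioi_zero]
  refine setIntegral_congr_fun measurableSet_Ioi fun t ht => ?_
  have ht : (0 : ℝ) < t := ht
  rw [smul_eq_mul, abs_of_pos (by positivity), inv_one_add_sq_mul_rpow_div_one_add ht]

theorem integral_Ioi_rpow_div_one_add {a : ℝ} (ha₀ : 0 < a) (ha₁ : a < 1) :
    ∫ t in Ioi 0, t ^ (a - 1) / (1 + t) = π / sin (π * a) := by
  simpa only [add_sub_cancel, Real.rpow_one, Gamma_one, div_one, Gamma_mul_Gamma_one_sub] using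
    integral_Ioi_rpow_div_one_add_rpow_add ha₀ (sub_pos.2 ha₁)

theorem integral_Ioi_rpow_div_one_add_rpow {s p : ℝ} (hs : 0 < s) (hsp : s < p) :
    ∫ x in Ioi 0, x ^ (s - 1) / (1 + x ^ p) = π / (p * sin (π * (s / p))) := by
  have hp : 0 < p := hs.trans hsp
  have h := integral_comp_rpow_Ioi_of_pos (g := fun t : ℝ => t ^ (s / p - 1) / (1 + t)) hp
  rw [integral_Ioi_rpow_div_one_add (div_pos hs hp) ((div_lt_one hp).2 hsp)] at h
  rw [mul_comm p, ← div_div, eq_div_iff hp.ne', ← h, ← integral_mul_const]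
  refine setIntegral_congr_fun measurableSet_Ioi fun x hx => ?_
  have hx : (0 : ℝ) < x := hx
  have hexp : x ^ (s - 1) = x ^ (p - 1) * x ^ (p * (s / p - 1)) := by
    rw [← rpow_add hx]
    congr 1
    field_simp
    ring
  rw [smul_eq_mul, ← rpow_mul hx.le, hexp]
  ring

theorem integral_Ioi_pow_div_one_add_pow {j p : ℕ} (hjp : j + 1 < p) :
    ∫ x in Ioi 0, x ^ j / (1 + x ^ p) = π / (p * sin (π * ((j + 1) / p))) := by
  rw [← integral_Ioi_rpow_div_one_add_rpow (s := j + 1) (p := p) (by positivity)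
    (by exact_mod_cast hjp)]
  refine setIntegral_congr_fun measurableSet_Ioi fun x _ => ?_
  simp only [add_sub_cancel_right, rpow_natCast]

section Inversion

variable {E : Type*} [NormedAddCommGroup E] [NormedSpace ℝ E]

theorem image_inv_Ioo_zero_one : (fun x : ℝ => x⁻¹) '' Ioo 0 1 = Ioi 1 := by
  rw [Set.image_inv_eq_inv, Set.inv_Ioo_0_left one_pos, inv_one]

theorem hasDerivWithinAt_inv_Ioo_zero_one :
    ∀ x ∈ Ioo (0 : ℝ) 1, HasDerivWithinAt (·⁻¹) (-(x ^ 2)⁻¹) (Ioo 0 1) x :=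
  fun _ hx => (hasDerivAt_inv hx.1.ne').hasDerivWithinAt

theorem integrableOn_Ioi_one_iff_comp_inv (f : ℝ → E) :
    IntegrableOn f (Ioi 1) ↔ IntegrableOn (fun x => (x ^ 2)⁻¹ • f x⁻¹) (Ioo 0 1) := by
  rw [← image_inv_Ioo_zero_one, integrableOn_image_iff_integrableOn_abs_deriv_smul
    measurableSet_Ioo hasDerivWithinAt_inv_Ioo_zero_one inv_injective.injOn]
  simp only [abs_neg, abs_inv, abs_pow, sq_abs]

theorem integral_Ioi_one_eq_integral_comp_inv (f : ℝ → E) :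
    ∫ x in Ioi 1, f x = ∫ x in Ioo 0 1, (x ^ 2)⁻¹ • f x⁻¹ := by
  rw [← image_inv_Ioo_zero_one, integral_image_eq_integral_abs_deriv_smul
    measurableSet_Ioo hasDerivWithinAt_inv_Ioo_zero_one inv_injective.injOn]
  simp only [abs_neg, abs_inv, abs_pow, sq_abs]

end Inversion

theorem intervalIntegrable_pow_div_one_add_pow (k p : ℕ) :
    IntervalIntegrable (fun x : ℝ => x ^ k / (1 + x ^ p)) volume 0 1 := by
  refine ContinuousOn.intervalIntegrable (.div (by fun_prop) (by fun_prop) fun x hx => ?_)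
  rw [Set.uIcc_of_le zero_le_one] at hx
  have := hx.1
  positivity

theorem inv_sq_smul_pow_inv_div_one_add_pow_inv {i j p : ℕ} (h : i + j + 2 = p) {x : ℝ}
    (hx : 0 < x) : (x ^ 2)⁻¹ • (x⁻¹ ^ j / (1 + x⁻¹ ^ p)) = x ^ i / (1 + x ^ p) := by
  subst h
  rw [smul_eq_mul, inv_pow, inv_pow, show x ^ (i + j + 2) = x ^ i * x ^ j * x ^ 2 by ring]
  field_simp
  ring

theorem integral_pow_div_one_add_pow_add_integral {i j p : ℕ} (h : i + j + 2 = p) :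
    (∫ x in (0 : ℝ)..1, x ^ j / (1 + x ^ p)) + ∫ x in (0 : ℝ)..1, x ^ i / (1 + x ^ p)
      = π / (p * sin (π * ((j + 1) / p))) := by
  have hinv : EqOn (fun x : ℝ => (x ^ 2)⁻¹ • (x⁻¹ ^ j / (1 + x⁻¹ ^ p)))
      (fun x => x ^ i / (1 + x ^ p)) (Ioo 0 1) :=
    fun x hx => inv_sq_smul_pow_inv_div_one_add_pow_inv h hx.1
  have hIoi : IntegrableOn (fun x : ℝ => x ^ j / (1 + x ^ p)) (Ioi 1) := by
    rw [integrableOn_Ioi_one_iff_comp_inv, integrableOn_congr_fun hinv measurableSet_Ioo,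
      ← intervalIntegrable_iff_integrableOn_Ioo_of_le zero_le_one]
    exact intervalIntegrable_pow_div_one_add_pow i p
  rw [← integral_Ioi_pow_div_one_add_pow (by omega),
    ← intervalIntegral.integral_interval_add_Ioi' (intervalIntegrable_pow_div_one_add_pow j p) hIoi,
    integral_Ioi_one_eq_integral_comp_inv, setIntegral_congr_fun measurableSet_Ioo hinv]
  simp only [intervalIntegral.integral_of_le zero_le_one, integral_Ioc_eq_integral_Ioo]

theorem integral_pow_div_one_add_pow_succ (q : ℕ) :
    ∫ x in (0 : ℝ)..1, x ^ q / (1 + x ^ (q + 1)) = log 2 / (q + 1) := by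
  have hderiv : ∀ x ∈ uIcc (0 : ℝ) 1,
      HasDerivAt (fun x => log (1 + x ^ (q + 1)) / (q + 1)) (x ^ q / (1 + x ^ (q + 1))) x := by
    intro x hx
    have hx : 0 ≤ x := (Set.uIcc_of_le (zero_le_one' ℝ) ▸ hx).1
    have h := (((hasDerivAt_pow (q + 1) x).const_add 1).log (by positivity)).div_const
      ((q : ℝ) + 1)
    refine h.congr_deriv ?_
    rw [Nat.add_sub_cancel]
    push_cast
    field_simp
  rw [intervalIntegral.integral_eq_sub_of_hasDerivAt hderiv
    (intervalIntegrable_pow_div_one_add_pow q (q + 1))]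
  norm_num

theorem integral_pow_div_one_add_pow_nonneg (m p : ℕ) :
    0 ≤ ∫ x in (0 : ℝ)..1, x ^ m / (1 + x ^ p) :=
  intervalIntegral.integral_nonneg zero_le_one fun x hx => by have := hx.1; positivity

theorem integral_pow_div_one_add_pow_le (m p : ℕ) :
    ∫ x in (0 : ℝ)..1, x ^ m / (1 + x ^ p) ≤ 1 / (m + 1) := by
  calc ∫ x in (0 : ℝ)..1, x ^ m / (1 + x ^ p)
      ≤ ∫ x in (0 : ℝ)..1, x ^ m :=
        intervalIntegral.integral_mono_on zero_le_one (intervalIntegrable_pow_div_one_add_pow m p)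
          (intervalIntegral.intervalIntegrable_pow m) fun x hx =>
            div_le_self (pow_nonneg hx.1 m) (le_add_of_nonneg_right (pow_nonneg hx.1 p))
    _ = 1 / (m + 1) := by simp [integral_pow]

theorem tendsto_integral_pow_div_one_add_pow (p : ℕ) :
    Tendsto (fun m : ℕ => ∫ x in (0 : ℝ)..1, x ^ m / (1 + x ^ p)) atTop (𝓝 0) :=
  squeeze_zero (integral_pow_div_one_add_pow_nonneg · p) (integral_pow_div_one_add_pow_le · p)
    tendsto_one_div_add_atTop_nhds_zero_nat

theorem sum_neg_one_pow_mul_pow {p : ℕ} {x : ℝ} (hx : 1 + x ^ p ≠ 0) (j N : ℕ) :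
    ∑ n ∈ Finset.range N, (-1) ^ n * x ^ (p * n + j)
      = x ^ j / (1 + x ^ p) - (-1) ^ N * (x ^ (p * N + j) / (1 + x ^ p)) := by
  have hx' : -x ^ p - 1 ≠ 0 := by contrapose! hx; linear_combination -hx
  have hgeom := geom_sum_eq (x := -x ^ p) (fun h => hx (by linear_combination -h)) N
  have hterm (n : ℕ) : (-1 : ℝ) ^ n * x ^ (p * n + j) = x ^ j * (-x ^ p) ^ n := by
    rw [neg_pow, pow_add, pow_mul]
    ring
  rw [Finset.sum_congr rfl fun n _ => hterm n, ← Finset.mul_sum, hgeom, neg_pow, pow_add, pow_mul]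
  field_simp
  ring

theorem sum_neg_one_pow_div_eq (p j N : ℕ) :
    ∑ n ∈ Finset.range N, (-1) ^ n / ((p : ℝ) * n + j + 1)
      = (∫ x in (0 : ℝ)..1, x ^ j / (1 + x ^ p))
        - (-1) ^ N * ∫ x in (0 : ℝ)..1, x ^ (p * N + j) / (1 + x ^ p) := by
  have hterm (n : ℕ) :
      ∫ x in (0 : ℝ)..1, (-1) ^ n * x ^ (p * n + j) = (-1) ^ n / ((p : ℝ) * n + j + 1) := by
    simp [integral_pow, div_eq_mul_inv]
  rw [← intervalIntegral.integral_const_mul,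
    ← intervalIntegral.integral_sub (intervalIntegrable_pow_div_one_add_pow j p)
      ((intervalIntegrable_pow_div_one_add_pow _ p).const_mul _),
    ← intervalIntegral.integral_congr fun x hx => sum_neg_one_pow_mul_pow
      (by have := (Set.uIcc_of_le (zero_le_one' ℝ) ▸ hx).1; positivity) j N,
    intervalIntegral.integral_finsetSum fun n _ =>
      (intervalIntegral.intervalIntegrable_pow _).const_mul _]
  exact Finset.sum_congr rfl fun n _ => (hterm n).symm

theorem tendsto_sum_neg_one_pow_div {p : ℕ} (hp : 0 < p) (j : ℕ) :
    Tendsto (fun N => ∑ n ∈ Finset.range N, (-1) ^ n / ((p : ℝ) * n + j + 1)) atTop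
      (𝓝 (∫ x in (0 : ℝ)..1, x ^ j / (1 + x ^ p))) := by
  have hexp : Tendsto (fun N : ℕ => p * N + j) atTop atTop :=
    tendsto_atTop_mono (fun N => le_add_right (Nat.le_mul_of_pos_left N hp)) tendsto_id
  have hrem : Tendsto (fun N : ℕ => (-1) ^ N * ∫ x in (0 : ℝ)..1, x ^ (p * N + j) / (1 + x ^ p))
      atTop (𝓝 0) :=
    squeeze_zero_norm (fun N => by simp)
      (tendsto_norm_zero.comp ((tendsto_integral_pow_div_one_add_pow p).comp hexp))
  simp_rw [sum_neg_one_pow_div_eq]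
  simpa using hrem.const_sub (∫ x in (0 : ℝ)..1, x ^ j / (1 + x ^ p))

theorem sum_range_integral_pow_div_one_add_pow {p : ℕ} (hp : 0 < p) :
    ∑ j ∈ Finset.range p, ∫ x in (0 : ℝ)..1, x ^ j / (1 + x ^ p)
      = log 2 / p + π / (2 * p) * ∑ k ∈ Finset.Icc 1 (p - 1), 1 / sin (k * π / p) := by
  obtain ⟨q, rfl⟩ : ∃ q, p = q + 1 := ⟨p - 1, by omega⟩
  have hpair : 2 * ∑ j ∈ Finset.range q, ∫ x in (0 : ℝ)..1, x ^ j / (1 + x ^ (q + 1))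
      = ∑ j ∈ Finset.range q, π / ((q + 1 : ℕ) * sin (π * ((j + 1) / (q + 1 : ℕ)))) := by
    rw [two_mul]
    nth_rewrite 2 [← Finset.sum_range_reflect]
    rw [← Finset.sum_add_distrib]
    exact Finset.sum_congr rfl fun j hj =>
      integral_pow_div_one_add_pow_add_integral (by simp at hj; omega)
  rw [Finset.sum_range_succ, integral_pow_div_one_add_pow_succ, add_comm, Nat.add_sub_cancel,
    ← Finset.Ico_add_one_right_eq_Icc, Finset.sum_Ico_eq_sum_range, Nat.add_sub_cancel]
  push_cast
  congr 1
  rw [← mul_right_inj' (two_ne_zero' ℝ), hpair, Finset.mul_sum, Finset.mul_sum]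
  refine Finset.sum_congr rfl fun j _ => ?_
  push_cast
  rw [show π * ((j + 1) / (q + 1)) = (1 + j) * π / (q + 1) by ring]
  field_simp

theorem H_mul_add_one_sub_H_mul (p n : ℕ) :
    H (p * (n + 1)) - H (p * n) = ∑ j ∈ Finset.range p, 1 / ((p : ℝ) * n + j + 1) := by
  rw [H, H, ← Finset.sum_Ico_eq_sub _ (Nat.mul_le_mul_left p n.le_succ),
    Finset.sum_Ico_eq_sum_range, show p * (n + 1) - p * n = p by rw [Nat.mul_succ]; omega]
  push_cast
  ring_nf

theorem Ep_eq_csc_sum (p : ℕ) (hp : 0 < p) :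
    Tendsto (fun N => ∑ n ∈ Finset.range N,
        (-1 : ℝ) ^ n * (H (p * (n + 1)) - H (p * n))) atTop
      (𝓝 (Real.log 2 / p
          + (π / (2 * p)) * ∑ k ∈ Finset.Icc 1 (p - 1), 1 / Real.sin (k * π / p))) := by
  have hblocks (N : ℕ) : ∑ n ∈ Finset.range N, (-1 : ℝ) ^ n * (H (p * (n + 1)) - H (p * n))
      = ∑ j ∈ Finset.range p, ∑ n ∈ Finset.range N, (-1) ^ n / ((p : ℝ) * n + j + 1) := by
    simp_rw [H_mul_add_one_sub_H_mul, Finset.mul_sum, mul_one_div]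
    exact Finset.sum_comm
  simp_rw [hblocks, ← sum_range_integral_pow_div_one_add_pow hp]
  exact tendsto_finsetSum _ fun j _ => tendsto_sum_neg_one_pow_div hp j
end
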